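/- Let (X,d) be a compact metric space and F a set-valued map on X that is also lower semi-continuous and satisfies F(X) = ⋃_{x∈X} F(x) = X. If the shift σ is Devaney chaotic on lim←F, then F is Devaney chaotic. -/
import Mathlib


open Set Metric

section Defs

variable {X : Type*} [MetricSpace X]

/-- A set-valued map: `F` assigns to each point a nonempty closed subset and
is upper semi-continuous. -/
def IsSetValuedMap (F : X → Set X) : Prop :=
  (∀ x, (F x).Nonempty) ∧ (∀ x, IsClosed (F x)) ∧
    ∀ x, ∀ V : Set X, IsOpen V → F x ⊆ V →
      ∃ U : Set X, IsOpen U ∧ x ∈ U ∧ ∀ t ∈ U, F t ⊆ V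

/-- Lower semi-continuity of a set-valued map. -/
def LowerSemiCont (F : X → Set X) : Prop :=
  ∀ x, ∀ y ∈ F x, ∀ V : Set X, IsOpen V → y ∈ V →
    ∃ U : Set X, IsOpen U ∧ x ∈ U ∧ ∀ t ∈ U, (F t ∩ V).Nonempty

/-- An orbit of the set-valued map `F`: `o (i+1) ∈ F (o i)` for all `i`. -/
def IsOrbit (F : X → Set X) (o : ℕ → X) : Prop := ∀ i, o (i + 1) ∈ F (o i)

/-- `P(F)`: the set of points having at least one periodic orbit. -/
def periodicPts (F : X → Set X) : Set X :=
  {x | ∃ o : ℕ → X, o 0 = x ∧ IsOrbit F o ∧ ∃ m, 1 ≤ m ∧ ∀ i, o (i + m) = o i}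

/-- The inverse set-valued map `F⁻¹(x) = {y : x ∈ F y}`. -/
def Finv (F : X → Set X) : X → Set X := fun x => {y | x ∈ F y}

/-- The iterates `F^n`, with `F^0 x = {x}` and `F^{n+1} x = ⋃_{y ∈ F^n x} F y`. -/
def svIter (F : X → Set X) : ℕ → X → Set X
  | 0, x => {x}
  | n + 1, x => ⋃ y ∈ svIter F n x, F y

/-- The inverse limit `lim← F = {(x_0,x_1,…) : x_i ∈ F (x_{i+1})}`. -/
def invLimit (F : X → Set X) : Set (ℕ → X) := {x | ∀ i, x i ∈ F (x (i + 1))}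

/-- The shift map `σ(x_0, x_1, …) = (x_1, x_2, …)`. -/
def shift (x : ℕ → X) : ℕ → X := fun i => x (i + 1)

/-- The metric `ρ(x,y) = Σ_i d(x_i,y_i)/2^i` on sequences. -/
noncomputable def rho (x y : ℕ → X) : ℝ := ∑' i, dist (x i) (y i) / 2 ^ i

/-- Topological transitivity for a set-valued map. -/
def SVTransitive (F : X → Set X) : Prop :=
  ∀ U V : Set X, IsOpen U → U.Nonempty → IsOpen V → V.Nonempty →
    ∃ n, 1 ≤ n ∧ ∃ o : ℕ → X, IsOrbit F o ∧ o 0 ∈ U ∧ o n ∈ V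

/-- Strong sensitivity with a given constant `δ`. -/
def StronglySensitiveWith (F : X → Set X) (δ : ℝ) : Prop :=
  0 < δ ∧ ∀ x : X, ∀ ε > 0, ∃ y : X, dist x y < ε ∧
    ∃ o : ℕ → X, o 0 = y ∧ IsOrbit F o ∧ ∃ n, 1 ≤ n ∧ δ < infDist (o n) (svIter F n x)

/-- Strong sensitivity: some `δ > 0` is a strongly sensitive constant. -/
def StronglySensitive (F : X → Set X) : Prop := ∃ δ, StronglySensitiveWith F δ

/-- Sensitivity for a set-valued map. -/
def SVSensitive (F : X → Set X) : Prop :=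
  ∃ δ > 0, ∀ ε > 0, ∀ o : ℕ → X, IsOrbit F o →
    ∃ o' : ℕ → X, IsOrbit F o' ∧ dist (o 0) (o' 0) < ε ∧ ∃ n, 1 ≤ n ∧ δ < dist (o n) (o' n)

/-- Topological transitivity of the shift `σ` on `lim← F` (relatively open sets). -/
def ShiftTransitive (F : X → Set X) : Prop :=
  ∀ U V : Set (ℕ → X), IsOpen U → IsOpen V →
    (U ∩ invLimit F).Nonempty → (V ∩ invLimit F).Nonempty →
    ∃ n, 1 ≤ n ∧ ∃ x ∈ U ∩ invLimit F, shift^[n] x ∈ V ∩ invLimit F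

/-- Sensitivity of the shift `σ` on `lim← F` with respect to the metric `ρ`. -/
def ShiftSensitive (F : X → Set X) : Prop :=
  ∃ δ > 0, ∀ x ∈ invLimit F, ∀ ε > 0, ∃ y ∈ invLimit F,
    rho x y < ε ∧ ∃ n, 1 ≤ n ∧ δ < rho (shift^[n] x) (shift^[n] y)

/-- The set of σ-periodic points of `lim← F`. -/
def shiftPerPts (F : X → Set X) : Set (ℕ → X) :=
  {z | z ∈ invLimit F ∧ ∃ n, 1 ≤ n ∧ shift^[n] z = z}

end Defs

lemma shift_iter {X : Type*} : ∀ (n : ℕ) (x : ℕ → X) (i : ℕ), shift^[n] x i = x (i + n)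
  | 0, x, i => by simp
  | n+1, x, i => by
      rw [Function.iterate_succ_apply, shift_iter n (shift x) i]
      rfl

lemma per_add {X : Type*} {p : ℕ → X} {m : ℕ} (hp : ∀ i, p (i + m) = p i) :
    ∀ (a s : ℕ), p (a + s * m) = p a
  | a, 0 => by simp
  | a, s+1 => by
      rw [show a + (s+1)*m = (a + s*m) + m by ring, hp, per_add hp a s]

lemma per_eq {X : Type*} {p : ℕ → X} {m : ℕ} (hp : ∀ i, p (i + m) = p i)
    {a b s₁ s₂ : ℕ} (h : a + s₁ * m = b + s₂ * m) : p a = p b := by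
  rw [← per_add hp a s₁, h, per_add hp b s₂]

lemma dist_summable {X : Type*} [MetricSpace X] [CompactSpace X] (x y : ℕ → X) :
    Summable (fun i => dist (x i) (y i) / 2 ^ i : ℕ → ℝ) := by
  have hD : ∀ a b : X, dist a b ≤ Metric.diam (Set.univ : Set X) := fun a b =>
    Metric.dist_le_diam_of_mem isCompact_univ.isBounded (mem_univ a) (mem_univ b)
  apply Summable.of_nonneg_of_le
    (fun i => div_nonneg dist_nonneg (by positivity))
    (fun i => ?_) ((summable_geometric_two).mul_left (Metric.diam (Set.univ : Set X)))
  rw [div_pow, one_pow, mul_one_div]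
  exact (div_le_div_iff_of_pos_right (by positivity)).mpr (hD _ _)

lemma dist_zero_le_rho {X : Type*} [MetricSpace X] [CompactSpace X] (x y : ℕ → X) :
    dist (x 0) (y 0) ≤ rho x y := by
  have h := Summable.le_tsum (dist_summable x y) 0
    (fun j _ => div_nonneg dist_nonneg (by positivity))
  simpa [rho] using h

/-- From `δ < ρ(σⁿ x, σⁿ y)` extract a single far coordinate. -/
lemma exists_far_coord {X : Type*} [MetricSpace X] [CompactSpace X] {p y : ℕ → X}
    {n : ℕ} {δ : ℝ} (hδ : 0 < δ) (h : δ < rho (shift^[n] p) (shift^[n] y)) :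
    ∃ i, δ / 4 < dist (p (i + n)) (y (i + n)) := by
  by_contra hc
  push_neg at hc
  have he : rho (shift^[n] p) (shift^[n] y) = ∑' i, dist (p (i + n)) (y (i + n)) / 2 ^ i := by
    unfold rho
    exact tsum_congr fun i => by rw [shift_iter, shift_iter]
  have hsum : Summable (fun i => dist (p (i + n)) (y (i + n)) / 2 ^ i : ℕ → ℝ) :=
    dist_summable (fun i => p (i + n)) (fun i => y (i + n))
  have hle : rho (shift^[n] p) (shift^[n] y) ≤ δ / 4 * 2 := by
    rw [he, show (δ / 4 * 2 : ℝ) = δ / 4 * ∑' i : ℕ, (1/2 : ℝ) ^ i by rw [tsum_geometric_two],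
      ← tsum_mul_left]
    refine Summable.tsum_le_tsum (fun i => ?_) hsum ((summable_geometric_two).mul_left _)
    rw [div_pow, one_pow, mul_one_div]
    exact (div_le_div_iff_of_pos_right (by positivity)).mpr (hc i)
  linarith

/-- The forward periodic orbit associated to a σ-periodic backward orbit. -/
lemma periodic_forward {X : Type*} {F : X → Set X} {p : ℕ → X} {m' : ℕ}
    (hinv : p ∈ invLimit F) (hper : ∀ i, p (i + (m' + 1)) = p i) :
    IsOrbit F (fun j => p (m' * j + m' + 1)) := by
  intro j
  have h1 := hinv (m' * (j + 1) + m' + 1)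
  have e : m' * (j + 1) + m' + 1 + 1 = (m' * j + m' + 1) + (m' + 1) := by ring
  rw [e, hper] at h1
  exact h1

/-- if `F` is also lower semi-continuous, `F(X) = X`, and the shift
`σ` is Devaney chaotic on `lim← F` (transitive, dense σ-periodic points, sensitive),
then `F` is Devaney chaotic (transitive, `P(F)` dense, sensitive). -/
theorem stmt14 {X : Type*} [MetricSpace X] [CompactSpace X] (F : X → Set X)
    (hF : IsSetValuedMap F) (hlsc : LowerSemiCont F) (hsur : ⋃ x, F x = Set.univ)
    (h1 : ShiftTransitive F)
    (h2 : invLimit F ⊆ closure (shiftPerPts F))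
    (h3 : ShiftSensitive F) :
    SVTransitive F ∧ Dense (periodicPts F) ∧ SVSensitive F := by
  classical
  -- backward selection
  have hb : ∀ y : X, ∃ z, y ∈ F z := by
    intro y
    have : y ∈ ⋃ x, F x := by rw [hsur]; exact mem_univ y
    exact mem_iUnion.mp this
  choose g hg using hb
  have hback : ∀ x : X, (fun i => g^[i] x) ∈ invLimit F := by
    intro x i
    show g^[i] x ∈ F (g^[i+1] x)
    rw [Function.iterate_succ_apply']
    exact hg _
  -- forward selection
  choose f hf using hF.1
  -- from σ-periodicity to coordinate periodicity
  have hperiod : ∀ (z : ℕ → X) (m : ℕ), shift^[m] z = z → ∀ i, z (i + m) = z i := by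
    intro z m hz i
    conv_rhs => rw [← hz]
    rw [shift_iter]
  constructor
  · -- transitivity
    intro U V hU hUne hV hVne
    obtain ⟨v, hv⟩ := hVne
    obtain ⟨u, hu⟩ := hUne
    have hUo : IsOpen ((fun z : ℕ → X => z 0) ⁻¹' V) := hV.preimage (continuous_apply 0)
    have hVo : IsOpen ((fun z : ℕ → X => z 0) ⁻¹' U) := hU.preimage (continuous_apply 0)
    obtain ⟨n, hn, x, ⟨hx0, hxinv⟩, hxn, _⟩ :=
      h1 _ _ hUo hVo ⟨fun i => g^[i] v, hv, hback v⟩ ⟨fun i => g^[i] u, hu, hback u⟩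
    have hxn' : x n ∈ U := by
      have h := hxn
      simp only [mem_preimage] at h
      rwa [shift_iter, Nat.zero_add] at h
    refine ⟨n, hn, fun i => if i ≤ n then x (n - i) else f^[i - n] (x 0), ?_, ?_, ?_⟩
    · intro i
      by_cases h1' : i + 1 ≤ n
      · have h2' : i ≤ n := by omega
        simp only [h1', h2', if_true]
        have := hxinv (n - (i + 1))
        have e : n - (i + 1) + 1 = n - i := by omega
        rwa [e] at this
      · by_cases h2' : i ≤ n
        · have hi : i = n := by omega
          subst hi
          simp only [h1', if_false, if_pos h2']
          have e1 : i + 1 - i = 1 := by omega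
          have e2 : i - i = 0 := by omega
          rw [e1, e2, Function.iterate_one]
          exact hf _
        · simp only [h1', if_false, show ¬ (i ≤ n) from h2', if_false]
          have e : i + 1 - n = (i - n) + 1 := by omega
          rw [e, Function.iterate_succ_apply']
          exact hf _
    · simp only [Nat.zero_le, if_true, Nat.sub_zero]
      exact hxn'
    · simp only [le_refl, if_true, Nat.sub_self]
      exact hx0
  constructor
  · -- dense periodic points
    rw [Metric.dense_iff]
    intro x r hr
    have hw : (fun i => g^[i] x) ∈ closure (shiftPerPts F) := h2 (hback x)
    have hWo : IsOpen {z : ℕ → X | z 0 ∈ ball x r} := isOpen_ball.preimage (continuous_apply 0)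
    have hwW : (fun i => g^[i] x) ∈ {z : ℕ → X | z 0 ∈ ball x r} := by
      simp [Metric.mem_ball, hr]
    obtain ⟨p, hpW, hpinv, m, hm, hσ⟩ := mem_closure_iff.mp hw _ hWo hwW
    obtain ⟨m', rfl⟩ : ∃ m', m = m' + 1 := ⟨m - 1, by omega⟩
    have hper := hperiod p (m' + 1) hσ
    refine ⟨p 0, hpW, fun j => p (m' * j + m' + 1), ?_, periodic_forward hpinv hper, ?_⟩
    · show p (m' * 0 + m' + 1) = p 0
      have : m' * 0 + m' + 1 = 0 + (m' + 1) := by ring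
      rw [this, hper]
    · refine ⟨m' + 1, le_refl _ |>.trans (by omega), fun j => ?_⟩
      simp only
      have e : m' * (j + (m' + 1)) + m' + 1 = (m' * j + m' + 1) + m' * (m' + 1) := by ring
      rw [e, per_add hper]
  · -- sensitivity
    obtain ⟨δ, hδ, hsens⟩ := h3
    refine ⟨δ / 16, by linarith, fun ε hε o ho => ?_⟩
    set x := o 0 with hx
    -- σ-periodic p with p 0 close to x
    have hw : (fun i => g^[i] x) ∈ closure (shiftPerPts F) := h2 (hback x)
    have hWo : IsOpen {z : ℕ → X | z 0 ∈ ball x (ε / 4)} :=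
      isOpen_ball.preimage (continuous_apply 0)
    have hwW : (fun i => g^[i] x) ∈ {z : ℕ → X | z 0 ∈ ball x (ε / 4)} := by
      simp [Metric.mem_ball]; linarith
    obtain ⟨p, hpW, hpinv, m, hm, hσp⟩ := mem_closure_iff.mp hw _ hWo hwW
    obtain ⟨m', rfl⟩ : ∃ m', m = m' + 1 := ⟨m - 1, by omega⟩
    have hperp := hperiod p (m' + 1) hσp
    have hp0 : dist (p 0) x < ε / 4 := hpW
    -- apply shift-sensitivity at p
    obtain ⟨y, hyinv, hρ, n, hn, hρn⟩ := hsens p hpinv (ε / 4) (by linarith)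
    have hpy0 : dist (p 0) (y 0) < ε / 4 := lt_of_le_of_lt (dist_zero_le_rho p y) hρ
    obtain ⟨i, hifar⟩ := exists_far_coord hδ hρn
    set k := i + n with hk
    have hk1 : 1 ≤ k := by omega
    -- σ-periodic y' close to y at coordinates 0 and k
    set θ := min (ε / 4) (δ / 16) with hθ
    have hθpos : 0 < θ := lt_min (by linarith) (by linarith)
    have hyW : y ∈ {z : ℕ → X | dist (z 0) (y 0) < θ ∧ dist (z k) (y k) < θ} := by
      simp [hθpos]
    have hWo' : IsOpen {z : ℕ → X | dist (z 0) (y 0) < θ ∧ dist (z k) (y k) < θ} := by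
      have e : {z : ℕ → X | dist (z 0) (y 0) < θ ∧ dist (z k) (y k) < θ} =
          ((fun z : ℕ → X => z 0) ⁻¹' ball (y 0) θ) ∩
          ((fun z : ℕ → X => z k) ⁻¹' ball (y k) θ) := by
        ext z; simp [Metric.mem_ball, dist_comm]
      rw [e]
      exact (isOpen_ball.preimage (continuous_apply 0)).inter
        (isOpen_ball.preimage (continuous_apply k))
    obtain ⟨y', ⟨hy'0, hy'k⟩, hy'inv, l, hl, hσy⟩ :=
      mem_closure_iff.mp (h2 hyinv) _ hWo' hyW
    obtain ⟨l', rfl⟩ : ∃ l', l = l' + 1 := ⟨l - 1, by omega⟩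
    have hpery := hperiod y' (l' + 1) hσy
    -- the common separation time
    obtain ⟨q, hqdef⟩ : ∃ q, q = (m' + 1) * (l' + 1) * (k + 1) := ⟨_, rfl⟩
    have hqk : k + 1 ≤ q := by
      rw [hqdef]
      exact Nat.le_mul_of_pos_left _ (by positivity)
    set t := q - k with htdef
    have ht : t + k = q := by omega
    have ht1 : 1 ≤ t := by omega
    -- the two forward periodic orbits
    set P : ℕ → X := fun j => p (m' * j + m' + 1) with hP
    set Y : ℕ → X := fun j => y' (l' * j + l' + 1) with hY
    have hPorb : IsOrbit F P := periodic_forward hpinv hperp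
    have hYorb : IsOrbit F Y := periodic_forward hy'inv hpery
    have hP0 : P 0 = p 0 := by
      show p (m' * 0 + m' + 1) = p 0
      have : m' * 0 + m' + 1 = 0 + (m' + 1) := by ring
      rw [this, hperp]
    have hY0 : Y 0 = y' 0 := by
      show y' (l' * 0 + l' + 1) = y' 0
      have : l' * 0 + l' + 1 = 0 + (l' + 1) := by ring
      rw [this, hpery]
    have hPt : P t = p k := by
      show p (m' * t + m' + 1) = p k
      have h2' : ((l' + 1) * (k + 1)) * (m' + 1) = t + k := by rw [ht, hqdef]; ring
      refine per_eq hperp (s₁ := (l' + 1) * (k + 1)) (s₂ := t + 1) ?_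
      rw [h2']; ring
    have hYt : Y t = y' k := by
      show y' (l' * t + l' + 1) = y' k
      have h2' : ((m' + 1) * (k + 1)) * (l' + 1) = t + k := by rw [ht, hqdef]; ring
      refine per_eq hpery (s₁ := (m' + 1) * (k + 1)) (s₂ := t + 1) ?_
      rw [h2']; ring
    -- separation between P and Y at time t
    have hfar : δ / 4 - θ < dist (P t) (Y t) := by
      rw [hPt, hYt]
      have htri : dist (p k) (y k) ≤ dist (p k) (y' k) + dist (y' k) (y k) := dist_triangle _ _ _
      have hθle : θ ≤ δ / 16 := min_le_right _ _
      have : δ / 4 < dist (p k) (y k) := hifar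
      linarith
    have hθle : θ ≤ δ / 16 := min_le_right _ _
    have hθε : θ ≤ ε / 4 := min_le_left _ _
    have htriP : dist (P t) (Y t) ≤ dist (P t) (o t) + dist (o t) (Y t) := dist_triangle _ _ _
    by_cases hc : δ / 16 < dist (o t) (P t)
    · refine ⟨P, hPorb, ?_, t, ht1, hc⟩
      rw [hP0, dist_comm]
      exact lt_of_lt_of_le hp0 (by linarith)
    · push_neg at hc
      refine ⟨Y, hYorb, ?_, t, ht1, ?_⟩
      · rw [hY0]
        have : dist x (y' 0) ≤ dist x (p 0) + dist (p 0) (y 0) + dist (y 0) (y' 0) := by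
          have t1 : dist x (y' 0) ≤ dist x (y 0) + dist (y 0) (y' 0) := dist_triangle _ _ _
          have t2 : dist x (y 0) ≤ dist x (p 0) + dist (p 0) (y 0) := dist_triangle _ _ _
          linarith
        have hxp : dist x (p 0) < ε / 4 := by rw [dist_comm]; exact hp0
        have hyy' : dist (y 0) (y' 0) < θ := by rw [dist_comm]; exact hy'0
        linarith
      · have : dist (P t) (o t) = dist (o t) (P t) := dist_comm _ _
        linarith
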